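/- arXiv:2112.02620 — 4 statements merged into one kernel-verified Lean document; each statement's English description precedes it below -/
import Mathlib

section
/- Let n ≥ 2, let η be an increasing homeomorphism of [0,∞) onto itself, and let c > 1. Then there exists k > 1, depending only on η and c, with the following property. Let Ω, Ω' be domains in ℝ^n with Ω ≠ ℝ^n and Ω' ≠ ℝ^n, and let f : Ω → Ω' be a homeomorphism such that f is η-quasisymmetric on every closed ball B(z,ρ) ⊆ Ω satisfying B(z,2ρ) ⊆ Ω. Then for every closed ball B = B(x,R) ⊆ Ω with diam(B) ≤ (1/k)·dist(B, ∂Ω), there exists a closed ball B' = B(f(x), R') ⊆ Ω' such that diam(B') ≤ (1/c)·dist(B', ∂Ω') and f(B) ⊆ B' ⊆ 2B' ⊆ f(kB). -/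
open Set Metric
open scoped ENNReal

noncomputable section

/-- Covering number: the smallest number of sets of diameter at most `r` needed to
cover `F` (`∞` if no finite such cover exists). -/
def coverN {X : Type*} [PseudoMetricSpace X] (F : Set X) (r : ℝ) : ℝ≥0∞ :=
  sInf {m : ℝ≥0∞ | ∃ 𝒰 : Finset (Set X), (𝒰.card : ℝ≥0∞) = m ∧
    (∀ U ∈ 𝒰, EMetric.diam U ≤ ENNReal.ofReal r) ∧ F ⊆ ⋃ U ∈ 𝒰, U}

/-- Regularized Assouad spectrum `dim_{A,reg}^θ(F)`. -/
def dimAreg {X : Type*} [PseudoMetricSpace X] (θ : ℝ) (F : Set X) : ℝ :=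
  sInf {α : ℝ | 0 < α ∧ ∃ C : ℝ, 0 < C ∧ ∀ x ∈ F, ∀ r R : ℝ,
    0 < r → r ≤ R ^ (1/θ) → R ^ (1/θ) < R → R < 1 →
    coverN (closedBall x R ∩ F) r ≤ ENNReal.ofReal (C * (R/r) ^ α)}

/-- (Unregularized) Assouad spectrum `dim_A^θ(F)`. -/
def dimAspec {X : Type*} [PseudoMetricSpace X] (θ : ℝ) (F : Set X) : ℝ :=
  sInf {α : ℝ | 0 < α ∧ ∃ C : ℝ, 0 < C ∧ ∀ x ∈ F, ∀ R : ℝ, 0 < R → R < 1 →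
    coverN (closedBall x R ∩ F) (R ^ (1/θ)) ≤ ENNReal.ofReal (C * (R / R ^ (1/θ)) ^ α)}

/-- Upper box-counting dimension of a (bounded) set. -/
def dimBupper {X : Type*} [PseudoMetricSpace X] (F : Set X) : ℝ :=
  sInf {α : ℝ | 0 < α ∧ ∃ C : ℝ, 0 < C ∧ ∀ r : ℝ, 0 < r → r ≤ diam F →
    coverN F r ≤ ENNReal.ofReal (C * r ^ (-α))}

/-- Assouad dimension. -/
def dimA {X : Type*} [PseudoMetricSpace X] (F : Set X) : ℝ :=
  sInf {α : ℝ | 0 < α ∧ ∃ C : ℝ, 0 < C ∧ ∀ x ∈ F, ∀ r R : ℝ, 0 < r → r ≤ R →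
    coverN (closedBall x R ∩ F) r ≤ ENNReal.ofReal (C * (R/r) ^ α)}

/-- Quasi-Assouad dimension: `sup_{0<θ<1} dim_{A,reg}^θ(F)`. -/
def dimqA {X : Type*} [PseudoMetricSpace X] (F : Set X) : ℝ :=
  sSup ((fun θ => dimAreg θ F) '' Ioo (0:ℝ) 1)

open Classical in
/-- Phase-transition parameter `ρ(F)`. -/
def rhoPT {X : Type*} [PseudoMetricSpace X] (F : Set X) : ℝ :=
  if ∃ θ ∈ Ioo (0:ℝ) 1, dimAreg θ F = dimqA F
  then sInf {θ | θ ∈ Ioo (0:ℝ) 1 ∧ dimAreg θ F = dimqA F}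
  else 1

/-- The axes-parallel cube `Q(x,R) = ∏ [xᵢ - R, xᵢ + R]`. -/
def cubeQ {n : ℕ} (x : EuclideanSpace ℝ (Fin n)) (R : ℝ) : Set (EuclideanSpace ℝ (Fin n)) :=
  {y | ∀ i, x i - R ≤ y i ∧ y i ≤ x i + R}

/-- The generation-`m` dyadic subcube of `Q(x,R)` with index `k`. -/
def dyadicCube {n : ℕ} (x : EuclideanSpace ℝ (Fin n)) (R : ℝ) (m : ℕ)
    (k : Fin n → Fin (2 ^ m)) : Set (EuclideanSpace ℝ (Fin n)) :=
  {y | ∀ i, x i - R + (k i : ℝ) * (2 * R / 2 ^ m) ≤ y i ∧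
        y i ≤ x i - R + ((k i : ℝ) + 1) * (2 * R / 2 ^ m)}

/-- `N_d(B(x,R) ∩ F, m)`: the number of generation-`m` dyadic subcubes of `Q(x,R)`
that intersect `B(x,R) ∩ F`. -/
def Nd {n : ℕ} (x : EuclideanSpace ℝ (Fin n)) (R : ℝ)
    (F : Set (EuclideanSpace ℝ (Fin n))) (m : ℕ) : ℕ :=
  Nat.card {k : Fin n → Fin (2 ^ m) // (dyadicCube x R m k ∩ (closedBall x R ∩ F)).Nonempty}

/-- `f` is `η`-quasisymmetric on the set `S`. -/
def QSOn {X Y : Type*} [PseudoMetricSpace X] [PseudoMetricSpace Y]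
    (η : ℝ → ℝ) (f : X → Y) (S : Set X) : Prop :=
  ∀ x ∈ S, ∀ y ∈ S, ∀ z ∈ S, x ≠ z →
    dist (f x) (f y) ≤ η (dist x y / dist x z) * dist (f x) (f z)

/-- Distance between two sets. -/
def setDist {X : Type*} [PseudoMetricSpace X] (A B : Set X) : ℝ :=
  sInf {d : ℝ | ∃ a ∈ A, ∃ b ∈ B, d = dist a b}

end


/-! The distance condition on `B` puts `kB` inside `Ω`, so `f` is `η`-quasisymmetric on
`B(x, s)` with `s = kR/2`. Let `m` be the distance from `f x` to `f(S(x, s))`; it is positive by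
injectivity, and since `f` is continuous and open, connectedness of `B(f x, m)` forces
`B(f x, m) ⊆ f(B(x, s))`, which lies in `Ω'` and in `f(kB)`. Comparing with a point of `S(x, s)`
where `m` is attained, quasisymmetry bounds `f(B)` by `η(2/k) m`. Choosing `k` with
`η(2/k) ≤ 1/(2c+1)` makes `B' = B(f x, m/(2c+1))` work. -/

lemma exists_mem_Ioc_le_of_monotoneOn_surjOn {η : ℝ → ℝ} (hmono : MonotoneOn η (Ici 0))
    (hsurj : SurjOn η (Ici 0) (Ici 0)) {v : ℝ} (hv : 0 < v) : ∃ t ∈ Ioc 0 1, η t ≤ v := by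
  obtain ⟨t, ht, rfl⟩ := hsurj hv.le
  have ht₀ : 0 < t := by
    refine (mem_Ici.1 ht).lt_of_ne ?_
    rintro rfl
    obtain ⟨t₀, ht₀, hη₀⟩ := hsurj (self_mem_Ici : (0 : ℝ) ∈ Ici 0)
    linarith [hmono self_mem_Ici ht₀ (mem_Ici.1 ht₀)]
  exact ⟨min t 1, ⟨lt_min ht₀ one_pos, min_le_right _ _⟩,
    hmono (le_min ht₀.le zero_le_one) ht (min_le_left _ _)⟩

section setDist

variable {X : Type*} [PseudoMetricSpace X] {A B : Set X}

lemma setDist_le_dist {a b : X} (ha : a ∈ A) (hb : b ∈ B) : setDist A B ≤ dist a b :=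
  csInf_le ⟨0, by rintro _ ⟨a, -, b, -, rfl⟩; exact dist_nonneg⟩ ⟨a, ha, b, hb, rfl⟩

lemma le_setDist {d : ℝ} (hA : A.Nonempty) (hB : B.Nonempty)
    (h : ∀ a ∈ A, ∀ b ∈ B, d ≤ dist a b) : d ≤ setDist A B := by
  obtain ⟨a, ha⟩ := hA
  obtain ⟨b, hb⟩ := hB
  exact le_csInf ⟨_, a, ha, b, hb, rfl⟩ (by rintro _ ⟨a, ha, b, hb, rfl⟩; exact h a ha b hb)

end setDist

lemma closedBall_subset_of_lt_setDist_frontier {E : Type*} [NormedAddCommGroup E]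
    [NormedSpace ℝ E] [FiniteDimensional ℝ E] {Ω A : Set E} {x : E} {r : ℝ}
    (hxΩ : x ∈ Ω) (hΩ : Ω ≠ univ) (hxA : x ∈ A) (hr : r < setDist A (frontier Ω)) :
    closedBall x r ⊆ Ω := by
  obtain ⟨y, hy, hxy⟩ := exists_mem_frontier_infDist_compl_eq_dist hxΩ hΩ
  refine (closedBall_subset_ball ?_).trans ball_infDist_compl_subset
  rw [hxy]
  exact hr.trans_le (setDist_le_dist hxA hy)

lemma closedBall_mul_subset_of_diam_le_setDist {E : Type*} [NormedAddCommGroup E]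
    [NormedSpace ℝ E] [FiniteDimensional ℝ E] [Nontrivial E] {Ω : Set E} {x : E} {k R : ℝ}
    (hk : 0 < k) (hR : 0 < R) (hΩ : Ω ≠ univ) (hBΩ : closedBall x R ⊆ Ω)
    (hdiam : diam (closedBall x R) ≤ 1 / k * setDist (closedBall x R) (frontier Ω)) :
    closedBall x (k * R) ⊆ Ω := by
  refine closedBall_subset_of_lt_setDist_frontier (hBΩ (mem_closedBall_self hR.le)) hΩ
    (mem_closedBall_self hR.le) ?_
  rw [diam_closedBall_eq x hR.le, one_div, ← div_eq_inv_mul, le_div_iff₀ hk] at hdiam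
  linarith [mul_pos hk hR]

lemma diam_closedBall_le_setDist_frontier {X : Type*} [MetricSpace X] [PreconnectedSpace X]
    {Ω : Set X} {y : X} {m c : ℝ} (hΩo : IsOpen Ω) (hΩ : Ω ≠ univ) (hm : 0 < m)
    (hc : 0 < c) (hball : ball y m ⊆ Ω) :
    diam (closedBall y (m / (2 * c + 1))) ≤
      1 / c * setDist (closedBall y (m / (2 * c + 1))) (frontier Ω) := by
  set r := m / (2 * c + 1) with hr_def
  have hr : 0 ≤ r := by positivity
  have hfrontier : m - r ≤ setDist (closedBall y r) (frontier Ω) := by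
    refine le_setDist (nonempty_closedBall.2 hr)
      (nonempty_frontier_iff.2 ⟨⟨y, hball (mem_ball_self hm)⟩, hΩ⟩) fun a ha b hb => ?_
    rw [hΩo.frontier_eq] at hb
    have hyb : m ≤ dist y b := not_lt.1 fun h => hb.2 (hball (mem_ball'.2 h))
    linarith [dist_triangle y a b, mem_closedBall'.1 ha]
  calc diam (closedBall y r) ≤ 2 * r := diam_closedBall hr
    _ = 1 / c * (m - r) := by rw [hr_def]; field_simp; ring
    _ ≤ _ := by gcongr

lemma image_closedBall_subset_of_dist_le {E F : Type*} [PseudoMetricSpace E]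
    [PseudoMetricSpace F] {f : E → F} {η : ℝ → ℝ} {x : E} {m r s : ℝ}
    (hmono : MonotoneOn η (Ici 0)) (hm : 0 ≤ m) (hs : 0 < s) (hr : r ≤ s)
    (hdist : ∀ y ∈ closedBall x s, dist (f x) (f y) ≤ η (dist x y / s) * m) :
    f '' closedBall x r ⊆ closedBall (f x) (η (r / s) * m) := by
  rintro _ ⟨y, hy, rfl⟩
  have hxy : dist x y ≤ r := mem_closedBall'.1 hy
  rw [mem_closedBall']
  calc dist (f x) (f y) ≤ η (dist x y / s) * m := hdist y (closedBall_subset_closedBall hr hy)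
    _ ≤ η (r / s) * m := by
      gcongr
      exact hmono (div_nonneg dist_nonneg hs.le) (div_nonneg (dist_nonneg.trans hxy) hs.le)
        (by gcongr)

section image

variable {E : Type*} [NormedAddCommGroup E] [ProperSpace E] {x : E} {s : ℝ}

lemma ball_infDist_image_sphere_subset_image_ball {F : Type*} [NormedAddCommGroup F]
    [NormedSpace ℝ F] {f : E → F} (hs : 0 < s)
    (hf : ContinuousOn f (closedBall x s)) (hopen : IsOpen (f '' ball x s)) :
    ball (f x) (infDist (f x) (f '' sphere x s)) ⊆ f '' ball x s := by
  rcases (ball (f x) (infDist (f x) (f '' sphere x s))).eq_empty_or_nonempty with h | h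
  · exact h ▸ empty_subset _
  have hK : IsClosed (f '' closedBall x s) :=
    ((isCompact_closedBall x s).image_of_continuousOn hf).isClosed
  refine (convex_ball _ _).isPreconnected.subset_left_of_subset_union hopen hK.isOpen_compl
    (disjoint_compl_right_iff_subset.2 (image_mono ball_subset_closedBall)) ?_
    ⟨f x, mem_ball_self (nonempty_ball.1 h), x, mem_ball_self hs, rfl⟩
  intro q hq
  by_cases hqK : q ∈ f '' closedBall x s
  · obtain ⟨w, hw, rfl⟩ := hqK
    refine Or.inl ⟨w, (mem_closedBall.1 hw).lt_of_ne fun hws => ?_, rfl⟩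
    exact (mem_ball'.1 hq).not_ge (infDist_le_dist_of_mem ⟨w, hws, rfl⟩)
  · exact Or.inr hqK

variable [NormedSpace ℝ E] [Nontrivial E]

lemma infDist_image_sphere_pos {F : Type*} [MetricSpace F] {f : E → F} (hs : 0 < s)
    (hinj : InjOn f (closedBall x s)) (hf : ContinuousOn f (sphere x s)) : 0 < infDist (f x) (f '' sphere x s) := by
  refine (((isCompact_sphere x s).image_of_continuousOn hf).isClosed.notMem_iff_infDist_pos
    ((NormedSpace.sphere_nonempty.2 hs.le).image f)).1 ?_
  rintro ⟨w, hw, hfw⟩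
  obtain rfl : w = x := hinj (sphere_subset_closedBall hw) (mem_closedBall_self hs.le) hfw
  exact hs.ne (by simpa using hw)

lemma dist_image_le_of_QSOn {F : Type*} [PseudoMetricSpace F] {f : E → F} {η : ℝ → ℝ}
    (hs : 0 < s) (hf : ContinuousOn f (sphere x s))
    (hqs : QSOn η f (closedBall x s)) {y : E} (hy : y ∈ closedBall x s) :
    dist (f x) (f y) ≤ η (dist x y / s) * infDist (f x) (f '' sphere x s) := by
  obtain ⟨_, ⟨z, hz, rfl⟩, hm⟩ :=
    ((isCompact_sphere x s).image_of_continuousOn hf).exists_infDist_eq_dist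
      ((NormedSpace.sphere_nonempty.2 hs.le).image f) (f x)
  have hxz : dist x z = s := by rw [dist_comm]; exact hz
  have := hqs x (mem_closedBall_self hs.le) y hy z (sphere_subset_closedBall hz)
    (dist_pos.1 (hxz ▸ hs))
  rwa [hm, ← hxz]

lemma exists_ball_subset_image_of_QSOn {F : Type*} [NormedAddCommGroup F] [NormedSpace ℝ F]
    {f : E → F} {η : ℝ → ℝ} (hs : 0 < s)
    (hinj : InjOn f (closedBall x s)) (hf : ContinuousOn f (closedBall x s))
    (hopen : IsOpen (f '' ball x s)) (hqs : QSOn η f (closedBall x s)) :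
    ∃ m > 0, ball (f x) m ⊆ f '' ball x s ∧
      ∀ y ∈ closedBall x s, dist (f x) (f y) ≤ η (dist x y / s) * m :=
  have hf' := hf.mono sphere_subset_closedBall
  ⟨_, infDist_image_sphere_pos hs hinj hf',
    ball_infDist_image_sphere_subset_image_ball hs hf hopen,
    fun _ hy => dist_image_le_of_QSOn hs hf' hqs hy⟩

end image

theorem stmt3_general {n : ℕ} (η : ℝ → ℝ)
    (hη_mono : StrictMonoOn η (Ici (0:ℝ)))
    (hη_bij : Set.BijOn η (Ici (0:ℝ)) (Ici (0:ℝ)))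
    (c : ℝ) (hc : 1 < c) :
    ∃ k : ℝ, 1 < k ∧
      ∀ (Ω Ω' : Set (EuclideanSpace ℝ (Fin n)))
        (f : EuclideanSpace ℝ (Fin n) → EuclideanSpace ℝ (Fin n)),
        IsOpen Ω → IsConnected Ω → Ω ≠ univ →
        IsOpen Ω' → IsConnected Ω' → Ω' ≠ univ →
        Set.BijOn f Ω Ω' → ContinuousOn f Ω →
        (∀ U ⊆ Ω, IsOpen U → IsOpen (f '' U)) →
        (∀ z ρ, 0 < ρ → closedBall z ρ ⊆ Ω → closedBall z (2 * ρ) ⊆ Ω →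
          QSOn η f (closedBall z ρ)) →
        ∀ x R, 0 < R → closedBall x R ⊆ Ω →
          diam (closedBall x R) ≤ (1 / k) * setDist (closedBall x R) (frontier Ω) →
          ∃ R' : ℝ, 0 < R' ∧ closedBall (f x) R' ⊆ Ω' ∧
            diam (closedBall (f x) R')
              ≤ (1 / c) * setDist (closedBall (f x) R') (frontier Ω') ∧
            f '' closedBall x R ⊆ closedBall (f x) R' ∧
            closedBall (f x) (2 * R') ⊆ f '' closedBall x (k * R) := by
  have hc₀ : 0 < c := by linarith
  obtain ⟨t, ⟨ht, ht₁⟩, hηt⟩ :=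
    exists_mem_Ioc_le_of_monotoneOn_surjOn hη_mono.monotoneOn hη_bij.surjOn
      (v := 1 / (2 * c + 1)) (by positivity)
  refine ⟨2 / t, (one_lt_div ht).2 (by linarith), ?_⟩
  rintro Ω Ω' f hΩo - hΩ hΩ'o - hΩ' hbij hcont hopen hqs x R hR hBΩ hdiam
  obtain ⟨z, hz⟩ := (ne_univ_iff_exists_notMem Ω).1 hΩ
  have := nontrivial_of_ne x z (ne_of_mem_of_not_mem (hBΩ (mem_closedBall_self hR.le)) hz)
  have h2sΩ := closedBall_mul_subset_of_diam_le_setDist (by positivity) hR hΩ hBΩ hdiam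
  set s := R / t
  have hs : 0 < s := by positivity
  have hRs : R ≤ s := le_div_self hR.le ht ht₁
  rw [show 2 / t * R = 2 * s by ring] at h2sΩ ⊢
  have hsΩ : closedBall x s ⊆ Ω := (closedBall_subset_closedBall (by linarith)).trans h2sΩ
  obtain ⟨m, hm, hball, hdist⟩ := exists_ball_subset_image_of_QSOn hs (hbij.injOn.mono hsΩ)
    (hcont.mono hsΩ) (hopen _ (ball_subset_closedBall.trans hsΩ) isOpen_ball)
    (hqs x s hs hsΩ h2sΩ)
  have hballΩ' : ball (f x) m ⊆ Ω' :=
    hball.trans ((image_mono (ball_subset_closedBall.trans hsΩ)).trans hbij.mapsTo.image_subset)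
  have hr : 0 < m / (2 * c + 1) := by positivity
  have h2r : 2 * (m / (2 * c + 1)) < m := by
    rw [← mul_div_assoc, div_lt_iff₀ (by linarith)]
    nlinarith
  refine ⟨m / (2 * c + 1), hr, (closedBall_subset_closedBall (by linarith)).trans
    ((closedBall_subset_ball h2r).trans hballΩ'),
    diam_closedBall_le_setDist_frontier hΩ'o hΩ' hm hc₀ hballΩ', ?_, ?_⟩
  · refine (image_closedBall_subset_of_dist_le hη_mono.monotoneOn hm.le hs hRs hdist).trans
      (closedBall_subset_closedBall ?_)
    rw [div_div_cancel₀ hR.ne']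
    exact (mul_le_mul_of_nonneg_right hηt hm.le).trans_eq (by ring)
  · exact (closedBall_subset_ball h2r).trans (hball.trans (image_mono
      (ball_subset_closedBall.trans (closedBall_subset_closedBall (by linarith)))))

/-- the egg yolk principle (Corollary 2.2 of the paper). -/
theorem stmt3 {n : ℕ} (hn : 2 ≤ n) (η : ℝ → ℝ)
    (hη_mono : StrictMonoOn η (Ici (0:ℝ)))
    (hη_cont : ContinuousOn η (Ici (0:ℝ)))
    (hη_bij : Set.BijOn η (Ici (0:ℝ)) (Ici (0:ℝ)))
    (c : ℝ) (hc : 1 < c) :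
    ∃ k : ℝ, 1 < k ∧
      ∀ (Ω Ω' : Set (EuclideanSpace ℝ (Fin n)))
        (f : EuclideanSpace ℝ (Fin n) → EuclideanSpace ℝ (Fin n)),
        IsOpen Ω → IsConnected Ω → Ω ≠ univ →
        IsOpen Ω' → IsConnected Ω' → Ω' ≠ univ →
        Set.BijOn f Ω Ω' → ContinuousOn f Ω →
        (∀ U ⊆ Ω, IsOpen U → IsOpen (f '' U)) →
        (∀ z ρ, 0 < ρ → closedBall z ρ ⊆ Ω → closedBall z (2 * ρ) ⊆ Ω →
          QSOn η f (closedBall z ρ)) →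
        ∀ x R, 0 < R → closedBall x R ⊆ Ω →
          diam (closedBall x R) ≤ (1 / k) * setDist (closedBall x R) (frontier Ω) →
          ∃ R' : ℝ, 0 < R' ∧ closedBall (f x) R' ⊆ Ω' ∧
            diam (closedBall (f x) R')
              ≤ (1 / c) * setDist (closedBall (f x) R') (frontier Ω') ∧
            f '' closedBall x R ⊆ closedBall (f x) R' ∧
            closedBall (f x) (2 * R') ⊆ f '' closedBall x (k * R) :=
  stmt3_general η hη_mono hη_bij c hc
end

section
/- For every set F ⊆ ℝ^n, the function θ ↦ dim_{A,reg}^θ(F) is nondecreasing on (0,1), and for every compact interval [a,b] ⊂ (0,1) there exists L ≥ 0 such that |dim_{A,reg}^{θ₁}(F) − dim_{A,reg}^{θ₂}(F)| ≤ L·|θ₁ − θ₂| for all θ₁, θ₂ ∈ [a,b]; in particular, θ ↦ dim_{A,reg}^θ(F) is continuous on (0,1). -/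
open Set Metric
open scoped ENNReal

/-!
Increasing `θ` only removes scales from the defining condition, so every exponent admissible
for `θ₂` is admissible for `θ₁ ≤ θ₂`. Conversely, if `α` is admissible for `θ₁`, then `K α` is
admissible for `θ₂`, where `K = θ₂ (1 - θ₁) / (θ₁ (1 - θ₂))`: on the new scales
`R^{1/θ₁} < r ≤ R^{1/θ₂}` one covers at the finer scale `R^{1/θ₁}` and uses
`R^{1 - 1/θ₁} = (R^{1 - 1/θ₂})^K ≤ (R/r)^K`. Hence
`dim^{θ₁} ≤ dim^{θ₂} ≤ K dim^{θ₁}`, and `K - 1 = (θ₂ - θ₁) / (θ₁ (1 - θ₂))` gives, on `[a, b]`,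
the Lipschitz constant `dim^b / (a (1 - b))`.
-/

/-- The case `s = t = ∅` holds by the convention `sInf ∅ = 0`, the value `dimAreg` takes when
no exponent is admissible. -/
lemma Real.sInf_le_sInf_of_subset {s t : Set ℝ} (hs : BddBelow s) (hts : t ⊆ s)
    (ht : t = ∅ → s = ∅) : sInf s ≤ sInf t := by
  rcases t.eq_empty_or_nonempty with h | h
  · simp [h, ht h]
  · exact csInf_le_csInf hs h hts

lemma one_le_mul_one_sub_div {θ₁ θ₂ : ℝ} (h₀ : 0 < θ₁) (h₁₂ : θ₁ ≤ θ₂) (h₂ : θ₂ < 1) :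
    1 ≤ θ₂ * (1 - θ₁) / (θ₁ * (1 - θ₂)) := by
  rw [one_le_div (mul_pos h₀ (sub_pos.2 h₂))]
  nlinarith

lemma Real.div_rpow_one_div_le {θ₁ θ₂ R r : ℝ} (h₀ : 0 < θ₁) (h₁₂ : θ₁ ≤ θ₂)
    (h₂ : θ₂ < 1) (hR : 0 < R) (hr : 0 < r) (hrR : r ≤ R ^ (1 / θ₂)) :
    R / R ^ (1 / θ₁) ≤ (R / r) ^ (θ₂ * (1 - θ₁) / (θ₁ * (1 - θ₂))) := by
  have hexp : (1 - 1 / θ₂) * (θ₂ * (1 - θ₁) / (θ₁ * (1 - θ₂))) = 1 - 1 / θ₁ := by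
    field_simp [(h₀.trans_le h₁₂).ne', (sub_pos.2 h₂).ne']
    ring
  calc R / R ^ (1 / θ₁) = R ^ (1 - 1 / θ₁) := by rw [Real.rpow_sub hR, Real.rpow_one]
    _ = (R ^ (1 - 1 / θ₂)) ^ (θ₂ * (1 - θ₁) / (θ₁ * (1 - θ₂))) := by
        rw [← Real.rpow_mul hR.le, hexp]
    _ ≤ (R / r) ^ (θ₂ * (1 - θ₁) / (θ₁ * (1 - θ₂))) := by
        have := zero_le_one.trans (one_le_mul_one_sub_div h₀ h₁₂ h₂)
        gcongr
        rw [Real.rpow_sub hR, Real.rpow_one]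
        gcongr

section

variable {X : Type*} [PseudoMetricSpace X]

lemma coverN_anti (F : Set X) {r r' : ℝ} (h : r' ≤ r) : coverN F r ≤ coverN F r' := by
  refine sInf_le_sInf ?_
  rintro m ⟨𝒰, h𝒰, hdiam, hcover⟩
  exact ⟨𝒰, h𝒰, fun U hU => (hdiam U hU).trans (ENNReal.ofReal_le_ofReal h), hcover⟩

def aregExponents (θ : ℝ) (F : Set X) : Set ℝ :=
  {α : ℝ | 0 < α ∧ ∃ C : ℝ, 0 < C ∧ ∀ x ∈ F, ∀ r R : ℝ,
    0 < r → r ≤ R ^ (1/θ) → R ^ (1/θ) < R → R < 1 →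
    coverN (closedBall x R ∩ F) r ≤ ENNReal.ofReal (C * (R/r) ^ α)}

lemma dimAreg_eq_sInf (θ : ℝ) (F : Set X) : dimAreg θ F = sInf (aregExponents θ F) := rfl

lemma aregExponents_bddBelow (θ : ℝ) (F : Set X) : BddBelow (aregExponents θ F) :=
  ⟨0, fun _ hα => hα.1.le⟩

lemma dimAreg_nonneg (θ : ℝ) (F : Set X) : 0 ≤ dimAreg θ F :=
  Real.sInf_nonneg fun _ hα => hα.1.le

variable {θ₁ θ₂ : ℝ}

lemma aregExponents_subset (h₀ : 0 < θ₁) (h₁₂ : θ₁ ≤ θ₂) (h₂ : θ₂ < 1) (F : Set X) :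
    aregExponents θ₂ F ⊆ aregExponents θ₁ F := by
  rintro α ⟨hα, C, hC, hcover⟩
  refine ⟨hα, C, hC, fun x hx r R hr hrR₁ hR₁R hR => ?_⟩
  have hR₀ : 0 < R := (hr.trans_le hrR₁).trans hR₁R
  refine hcover x hx r R hr (hrR₁.trans ?_) ?_ hR
  · exact Real.rpow_le_rpow_of_exponent_ge hR₀ hR.le (one_div_le_one_div_of_le h₀ h₁₂)
  · exact Real.rpow_lt_self_of_lt_one hR₀ hR (one_lt_one_div (h₀.trans_le h₁₂) h₂)

lemma mul_mem_aregExponents (h₀ : 0 < θ₁) (h₁₂ : θ₁ ≤ θ₂) (h₂ : θ₂ < 1) {F : Set X} {α : ℝ}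
    (hα : α ∈ aregExponents θ₁ F) :
    θ₂ * (1 - θ₁) / (θ₁ * (1 - θ₂)) * α ∈ aregExponents θ₂ F := by
  obtain ⟨hα, C, hC, hcover⟩ := hα
  set K := θ₂ * (1 - θ₁) / (θ₁ * (1 - θ₂))
  have hK₁ : 1 ≤ K := one_le_mul_one_sub_div h₀ h₁₂ h₂
  refine ⟨by positivity, C, hC, fun x hx r R hr hrR₂ hR₂R hR => ?_⟩
  have hR₀ : 0 < R := (hr.trans_le hrR₂).trans hR₂R
  have hRr : 1 ≤ R / r := (one_le_div hr).2 (hrR₂.trans hR₂R.le)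
  set s := min r (R ^ (1 / θ₁)) with hs_def
  have hs : 0 < s := lt_min hr (Real.rpow_pos_of_pos hR₀ _)
  have hRs : R / s ≤ (R / r) ^ K := by
    rcases min_choice r (R ^ (1 / θ₁)) with h | h <;> rw [hs_def, h]
    · exact Real.self_le_rpow_of_one_le hRr hK₁
    · exact Real.div_rpow_one_div_le h₀ h₁₂ h₂ hR₀ hr hrR₂
  calc coverN (closedBall x R ∩ F) r ≤ coverN (closedBall x R ∩ F) s :=
        coverN_anti _ (min_le_left _ _)
    _ ≤ ENNReal.ofReal (C * (R / s) ^ α) :=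
        hcover x hx s R hs (min_le_right _ _)
          (Real.rpow_lt_self_of_lt_one hR₀ hR (one_lt_one_div h₀ (h₁₂.trans_lt h₂))) hR
    _ ≤ ENNReal.ofReal (C * (R / r) ^ (K * α)) := by
        rw [Real.rpow_mul (by positivity)]
        gcongr

theorem dimAreg_mono (F : Set X) (h₀ : 0 < θ₁) (h₁₂ : θ₁ ≤ θ₂) (h₂ : θ₂ < 1) :
    dimAreg θ₁ F ≤ dimAreg θ₂ F :=
  Real.sInf_le_sInf_of_subset (aregExponents_bddBelow θ₁ F) (aregExponents_subset h₀ h₁₂ h₂ F)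
    fun h => eq_empty_of_forall_notMem fun _ hα => h.subset (mul_mem_aregExponents h₀ h₁₂ h₂ hα)

theorem dimAreg_le_mul (F : Set X) (h₀ : 0 < θ₁) (h₁₂ : θ₁ ≤ θ₂) (h₂ : θ₂ < 1) :
    dimAreg θ₂ F ≤ θ₂ * (1 - θ₁) / (θ₁ * (1 - θ₂)) * dimAreg θ₁ F := by
  have hK := zero_le_one.trans (one_le_mul_one_sub_div h₀ h₁₂ h₂)
  rw [dimAreg_eq_sInf, dimAreg_eq_sInf, ← smul_eq_mul, ← Real.sInf_smul_of_nonneg hK]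
  refine Real.sInf_le_sInf_of_subset (aregExponents_bddBelow θ₂ F) ?_ fun h => ?_
  · rintro _ ⟨α, hα, rfl⟩
    exact mul_mem_aregExponents h₀ h₁₂ h₂ hα
  · exact subset_eq_empty (aregExponents_subset h₀ h₁₂ h₂ F) (smul_set_eq_empty.1 h)

variable {a b : ℝ}

lemma dimAreg_sub_le (F : Set X) (ha : 0 < a) (hb : b < 1) (h₁ : a ≤ θ₁) (h₁₂ : θ₁ ≤ θ₂)
    (h₂ : θ₂ ≤ b) :
    dimAreg θ₂ F - dimAreg θ₁ F ≤ dimAreg b F / (a * (1 - b)) * (θ₂ - θ₁) := by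
  have hθ₁ : 0 < θ₁ := ha.trans_le h₁
  have hθ₂ : θ₂ < 1 := h₂.trans_lt hb
  have hK : θ₂ * (1 - θ₁) / (θ₁ * (1 - θ₂)) - 1 = (θ₂ - θ₁) / (θ₁ * (1 - θ₂)) := by
    field_simp [hθ₁.ne', (sub_pos.2 hθ₂).ne']
    ring
  have hden : a * (1 - b) ≤ θ₁ * (1 - θ₂) := by gcongr
  calc dimAreg θ₂ F - dimAreg θ₁ F
      ≤ (θ₂ * (1 - θ₁) / (θ₁ * (1 - θ₂)) - 1) * dimAreg θ₁ F := by
        linarith [dimAreg_le_mul F hθ₁ h₁₂ hθ₂]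
    _ ≤ (θ₂ - θ₁) / (a * (1 - b)) * dimAreg b F := by
        rw [hK]
        have := sub_nonneg.2 h₁₂
        have := sub_pos.2 hb
        gcongr
        · exact dimAreg_nonneg θ₁ F
        · exact dimAreg_mono F hθ₁ (h₁₂.trans h₂) hb
    _ = dimAreg b F / (a * (1 - b)) * (θ₂ - θ₁) := by ring

theorem abs_dimAreg_sub_le (F : Set X) (ha : 0 < a) (hb : b < 1) (h₁ : θ₁ ∈ Icc a b)
    (h₂ : θ₂ ∈ Icc a b) :
    |dimAreg θ₁ F - dimAreg θ₂ F| ≤ dimAreg b F / (a * (1 - b)) * |θ₁ - θ₂| := by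
  wlog h₁₂ : θ₁ ≤ θ₂ generalizing θ₁ θ₂
  · rw [abs_sub_comm, abs_sub_comm θ₁]
    exact this h₂ h₁ (le_of_not_ge h₁₂)
  have hmono := dimAreg_mono F (ha.trans_le h₁.1) h₁₂ (h₂.2.trans_lt hb)
  rw [abs_sub_comm, abs_of_nonneg (sub_nonneg.2 hmono), abs_sub_comm,
    abs_of_nonneg (sub_nonneg.2 h₁₂)]
  exact dimAreg_sub_le F ha hb h₁.1 h₁₂ h₂.2

theorem dimAreg_continuousOn (F : Set X) : ContinuousOn (dimAreg · F) (Ioo 0 1) := by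
  rintro θ ⟨h₀, h₁⟩
  have hlip : LipschitzOnWith (dimAreg ((θ + 1) / 2) F / (θ / 2 * (1 - (θ + 1) / 2))).toNNReal
      (dimAreg · F) (Icc (θ / 2) ((θ + 1) / 2)) :=
    LipschitzOnWith.of_dist_le_mul fun θ₁ hθ₁ θ₂ hθ₂ =>
      (abs_dimAreg_sub_le F (by linarith) (by linarith) hθ₁ hθ₂).trans
        (by rw [Real.dist_eq]; gcongr; exact Real.le_coe_toNNReal _)
  exact (hlip.continuousOn.continuousAt
    (Icc_mem_nhds (by linarith) (by linarith))).continuousWithinAt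

end

/-- the regularized Assouad spectrum is nondecreasing in `θ`, locally
Lipschitz on compact subintervals of `(0,1)`, and in particular continuous on `(0,1)`. -/
theorem stmt8 {n : ℕ} (F : Set (EuclideanSpace ℝ (Fin n))) :
    (∀ θ₁ θ₂ : ℝ, 0 < θ₁ → θ₁ ≤ θ₂ → θ₂ < 1 → dimAreg θ₁ F ≤ dimAreg θ₂ F) ∧
    (∀ a b : ℝ, 0 < a → a ≤ b → b < 1 → ∃ L : ℝ, 0 ≤ L ∧
      ∀ θ₁ ∈ Icc a b, ∀ θ₂ ∈ Icc a b,
        |dimAreg θ₁ F - dimAreg θ₂ F| ≤ L * |θ₁ - θ₂|) ∧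
    ContinuousOn (fun θ => dimAreg θ F) (Ioo (0:ℝ) 1) :=
  ⟨fun _ _ h₀ h₁₂ h₂ => dimAreg_mono F h₀ h₁₂ h₂,
    fun _ b ha _ hb => ⟨_, div_nonneg (dimAreg_nonneg b F) (mul_nonneg ha.le (sub_pos.2 hb).le),
      fun _ h₁ _ h₂ => abs_dimAreg_sub_le F ha hb h₁ h₂⟩,
    dimAreg_continuousOn F⟩
end

section
/- Let F ⊆ ℝ^n and let ρ = ρ(F) be the phase-transition parameter of F. Then for all 0 < θ < ρ: dim_{A,reg}^θ(F) ≥ ((1 − ρ)/(1 − θ))·dim_{qA}(F). -/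
open Set Metric
open scoped ENNReal

section Aux

variable {X : Type*} [PseudoMetricSpace X]

/-- the admissibility set for `dimAreg`. -/
def Sreg (θ : ℝ) (F : Set X) : Set ℝ :=
  {α : ℝ | 0 < α ∧ ∃ C : ℝ, 0 < C ∧ ∀ x ∈ F, ∀ r R : ℝ,
    0 < r → r ≤ R ^ (1/θ) → R ^ (1/θ) < R → R < 1 →
    coverN (closedBall x R ∩ F) r ≤ ENNReal.ofReal (C * (R/r) ^ α)}

lemma dimAreg_eq (θ : ℝ) (F : Set X) : dimAreg θ F = sInf (Sreg θ F) := rfl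

lemma coverN_mono {A B : Set X} (h : A ⊆ B) (r : ℝ) : coverN A r ≤ coverN B r := by
  apply sInf_le_sInf
  rintro m ⟨𝒰, hc, hd, hcov⟩
  exact ⟨𝒰, hc, hd, h.trans hcov⟩

lemma Sreg_anti {θ θ' : ℝ} (hθ0 : 0 < θ) (hle : θ ≤ θ') (hθ'1 : θ' < 1) (F : Set X) :
    Sreg θ' F ⊆ Sreg θ F := by
  rintro α ⟨hα, C, hC, hb⟩
  refine ⟨hα, C, hC, fun x hx r R hr hrR hRR hR1 => ?_⟩
  have hθ'0 : 0 < θ' := lt_of_lt_of_le hθ0 hle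
  have hR0 : 0 < R := lt_trans (lt_of_lt_of_le hr hrR) hRR
  have h1 : (1:ℝ)/θ' ≤ 1/θ := by
    apply div_le_div_of_nonneg_left one_pos.le hθ0 hle
  have h2 : R ^ ((1:ℝ)/θ) ≤ R ^ ((1:ℝ)/θ') :=
    Real.rpow_le_rpow_of_exponent_ge hR0 hR1.le h1
  have h3 : (1:ℝ) < 1/θ' := by rw [lt_div_iff₀ hθ'0]; linarith
  have h4 : R ^ ((1:ℝ)/θ') < R := by
    have := Real.rpow_lt_rpow_of_exponent_gt hR0 hR1 h3
    rwa [Real.rpow_one] at this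
  exact hb x hx r R hr (hrR.trans h2) h4 hR1

lemma Sreg_transfer {θ θ' α : ℝ} (hθ0 : 0 < θ) (hle : θ ≤ θ') (hθ'1 : θ' < 1)
    (F : Set X) (hmem : α ∈ Sreg θ F) : ((1-θ)/(1-θ')) * α ∈ Sreg θ' F := by
  obtain ⟨hα, C, hC, hb⟩ := hmem
  have hθ'0 : 0 < θ' := lt_of_lt_of_le hθ0 hle
  have h1θ' : (0:ℝ) < 1 - θ' := by linarith
  have h1θ : (0:ℝ) < 1 - θ := by linarith
  have hθ1 : θ < 1 := lt_of_le_of_lt hle hθ'1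
  have hc1 : (1:ℝ) ≤ (1-θ)/(1-θ') := (one_le_div h1θ').2 (by linarith)
  have hα' : 0 < (1-θ)/(1-θ') * α := mul_pos (div_pos h1θ h1θ') hα
  refine ⟨hα', C, hC, fun x hx r R hr hrR hRR hR1 => ?_⟩
  have hR0 : 0 < R := lt_trans (lt_of_lt_of_le hr hrR) hRR
  have hrR' : r < R := lt_of_le_of_lt hrR hRR
  have hr1 : r < 1 := lt_trans hrR' hR1
  have h1θi : (1:ℝ) < 1/θ := by rw [lt_div_iff₀ hθ0]; linarith
  have haa' : α ≤ (1-θ)/(1-θ') * α := le_mul_of_one_le_left hα.le hc1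
  by_cases hcase : r ≤ R ^ ((1:ℝ)/θ)
  · -- direct application
    have hRθ : R ^ ((1:ℝ)/θ) < R := by
      have := Real.rpow_lt_rpow_of_exponent_gt hR0 hR1 h1θi
      rwa [Real.rpow_one] at this
    refine (hb x hx r R hr hcase hRθ hR1).trans (ENNReal.ofReal_le_ofReal ?_)
    apply mul_le_mul_of_nonneg_left _ hC.le
    exact Real.rpow_le_rpow_of_exponent_le ((one_le_div hr).2 hrR'.le) haa'
  · -- enlarged ball
    push_neg at hcase
    set s := r ^ θ with hs_def
    have hs0 : 0 < s := Real.rpow_pos_of_pos hr θ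
    have hs1 : s < 1 := Real.rpow_lt_one hr.le hr1 hθ0
    have hsr : s ^ ((1:ℝ)/θ) = r := by
      rw [hs_def, ← Real.rpow_mul hr.le, mul_one_div_cancel hθ0.ne', Real.rpow_one]
    have hRs : R < s := by
      have h := Real.rpow_lt_rpow (Real.rpow_nonneg hR0.le _) hcase hθ0
      rwa [← Real.rpow_mul hR0.le, one_div_mul_cancel hθ0.ne', Real.rpow_one] at h
    have hrs : r < s := by
      have := Real.rpow_lt_rpow_of_exponent_gt hs0 hs1 h1θi
      rw [Real.rpow_one] at this
      rwa [hsr] at this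
    have step1 : coverN (closedBall x R ∩ F) r ≤ coverN (closedBall x s ∩ F) r :=
      coverN_mono (inter_subset_inter_left _ (closedBall_subset_closedBall hRs.le)) _
    have step2 : coverN (closedBall x s ∩ F) r ≤ ENNReal.ofReal (C * (s/r) ^ α) :=
      hb x hx r s hr (le_of_eq hsr.symm) (by rw [hsr]; exact hrs) hs1
    refine (step1.trans step2).trans (ENNReal.ofReal_le_ofReal ?_)
    apply mul_le_mul_of_nonneg_left _ hC.le
    -- (s/r)^α ≤ (R/r)^α'
    have e1 : s / r = r ^ (θ - 1) := by
      rw [Real.rpow_sub hr, Real.rpow_one]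
    have e2 : (s/r) ^ α = r ^ ((θ-1)*α) := by
      rw [e1, Real.rpow_mul hr.le]
    have ekey : (θ-1)*α = (θ'-1)*((1-θ)/(1-θ')*α) := by
      field_simp
      ring
    have e3 : r ^ θ' ≤ R := by
      have h := Real.rpow_le_rpow hr.le hrR hθ'0.le
      rwa [← Real.rpow_mul hR0.le, one_div_mul_cancel hθ'0.ne', Real.rpow_one] at h
    have e4 : r ^ (θ'-1) = r^θ'/r := by rw [Real.rpow_sub hr, Real.rpow_one]
    calc (s/r) ^ α = r ^ ((θ'-1)*((1-θ)/(1-θ')*α)) := by rw [e2, ekey]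
      _ = (r^θ'/r) ^ ((1-θ)/(1-θ')*α) := by rw [Real.rpow_mul hr.le, e4]
      _ ≤ (R/r) ^ ((1-θ)/(1-θ')*α) := by
          apply Real.rpow_le_rpow (div_nonneg (Real.rpow_nonneg hr.le _) hr.le)
            _ hα'.le
          gcongr
      
end Aux

section Aux2
variable {X : Type*} [PseudoMetricSpace X]

lemma Sreg_bddBelow (θ : ℝ) (F : Set X) : BddBelow (Sreg θ F) :=
  ⟨0, fun _ hb => hb.1.le⟩

lemma dimqA_nonneg (F : Set X) : 0 ≤ dimqA F := by
  apply Real.sSup_nonneg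
  rintro y ⟨t, _, rfl⟩
  exact dimAreg_nonneg t F

lemma dimAreg_lower {θ θ' : ℝ} (hθ0 : 0 < θ) (hle : θ ≤ θ') (hθ'1 : θ' < 1) (F : Set X) :
    (1 - θ') / (1 - θ) * dimAreg θ' F ≤ dimAreg θ F := by
  have h1θ' : (0:ℝ) < 1 - θ' := by linarith
  have h1θ : (0:ℝ) < 1 - θ := by linarith [lt_of_le_of_lt hle hθ'1]
  rw [dimAreg_eq, dimAreg_eq]
  rcases eq_empty_or_nonempty (Sreg θ F) with he | hne
  · have he' : Sreg θ' F = ∅ :=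
      eq_empty_of_subset_empty (he ▸ Sreg_anti hθ0 hle hθ'1 F)
    rw [he, he', Real.sInf_empty, mul_zero]
  · apply le_csInf hne
    intro α hα
    have hmem := Sreg_transfer hθ0 hle hθ'1 F hα
    have h2 : sInf (Sreg θ' F) ≤ (1-θ)/(1-θ') * α :=
      csInf_le (Sreg_bddBelow θ' F) hmem
    have h3 : (1-θ')/(1-θ) * ((1-θ)/(1-θ') * α) = α := by
      field_simp
    calc (1-θ')/(1-θ) * sInf (Sreg θ' F)
        ≤ (1-θ')/(1-θ) * ((1-θ)/(1-θ') * α) := by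
          apply mul_le_mul_of_nonneg_left h2 (by positivity)
      _ = α := h3

end Aux2


/-- lower bound for the regularized Assouad spectrum below the
phase-transition parameter. -/
theorem stmt10 {n : ℕ} (F : Set (EuclideanSpace ℝ (Fin n))) (θ : ℝ)
    (hθ0 : 0 < θ) (hθρ : θ < rhoPT F) :
    ((1 - rhoPT F) / (1 - θ)) * dimqA F ≤ dimAreg θ F := by
  classical
  by_cases hE : ∃ θ' ∈ Ioo (0:ℝ) 1, dimAreg θ' F = dimqA F
  · have hρ : rhoPT F = sInf {t | t ∈ Ioo (0:ℝ) 1 ∧ dimAreg t F = dimqA F} := by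
      rw [rhoPT, if_pos hE]
    set E : Set ℝ := {t | t ∈ Ioo (0:ℝ) 1 ∧ dimAreg t F = dimqA F} with hEdef
    have hEne : E.Nonempty := by
      obtain ⟨t, ht, heq⟩ := hE; exact ⟨t, ht, heq⟩
    have hEbdd : BddBelow E := ⟨0, fun t ht => ht.1.1.le⟩
    set q := dimqA F with hq
    set d := dimAreg θ F with hd
    have hq0 : 0 ≤ q := dimqA_nonneg F
    have hd0 : 0 ≤ d := dimAreg_nonneg θ F
    -- θ < 1
    obtain ⟨t₀, ht₀⟩ := hEne
    have hθ1 : θ < 1 := by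
      have h1 : rhoPT F ≤ t₀ := by rw [hρ]; exact csInf_le hEbdd ht₀
      have := ht₀.1.2
      linarith
    have h1θ : (0:ℝ) < 1 - θ := by linarith
    have key : ∀ t ∈ E, (1 - t) * q ≤ (1 - θ) * d := by
      intro t ht
      have hρt : rhoPT F ≤ t := by rw [hρ]; exact csInf_le hEbdd ht
      have hθt : θ ≤ t := le_of_lt (lt_of_lt_of_le hθρ hρt)
      have ht1 : t < 1 := ht.1.2
      have := dimAreg_lower hθ0 hθt ht1 F
      rw [ht.2, ← hq, ← hd] at this
      rw [div_mul_eq_mul_div, div_le_iff₀ h1θ] at this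
      linarith
    rw [div_mul_eq_mul_div, div_le_iff₀ h1θ]
    rcases eq_or_lt_of_le hq0 with hq0' | hqpos
    · rw [← hq0', mul_zero]
      positivity
    · have hρge : 1 - (1 - θ) * d / q ≤ rhoPT F := by
        rw [hρ]
        apply le_csInf ⟨t₀, ht₀⟩
        intro t ht
        have h2 : (1 - t) * q ≤ (1 - θ) * d := key t ht
        have h3 : 1 - t ≤ (1 - θ) * d / q := by
          rw [le_div_iff₀ hqpos]; linarith
        linarith
      have h4 : (1 - rhoPT F) * q ≤ ((1 - θ) * d / q) * q := by
        apply mul_le_mul_of_nonneg_right _ hq0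
        linarith
      rw [div_mul_cancel₀ _ (ne_of_gt hqpos)] at h4
      linarith
  · have hρ : rhoPT F = 1 := by rw [rhoPT, if_neg hE]
    rw [hρ]
    simp only [sub_self, zero_div, zero_mul]
    exact dimAreg_nonneg θ F
end

section
/- Let n ≥ 1, p > n, C₃ > 0, x ∈ ℝ^n, R > 0, and s > 0. Let μ be a Borel measure on ℝ^n with μ(Q(x,R)) < ∞, and let f : Q(x,R) → ℝ^n be a map such that for every integer j ≥ 0 and every generation-j dyadic subcube Q' of Q(x,R) one has diam f(Q') ≤ C₃·(diam Q')^{1−n/p}·μ(Q')^{1/p}. For each j ≥ 0 let M(j) denote the number of generation-j dyadic subcubes Q' of Q(x,R) with diam f(Q') > s (the 'major' cubes of generation j). Then there exists a constant C > 0, depending only on n, p, and C₃, such that for every integer m ≥ 0: ∑_{j=m}^∞ M(j) ≤ C·s^{−p}·(2^{−m}R)^{p−n}·μ(Q(x,R)). -/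
open Set Metric
open scoped ENNReal

/-!
A major cube `Q'` of generation `j` has `diam Q' ≤ √n · 2R / 2^j`, so the Morrey–Sobolev bound
forces `s^p < C₃^p (√n · 2R / 2^j)^(p-n) μ(Q')`. Every point lies in at most `2^n` cubes of one
generation, so the measures of these cubes add up to at most `2^n μ(Q(x,R))`; this bounds `M(j)` by
a constant times `s^(-p) (R / 2^j)^(p-n) μ(Q(x,R))`, and for `p > n` these bounds form a geometric
series in `j`.
-/

open MeasureTheory

lemma Set.encard_le_two_of_forall_le_add_one {S : Set ℕ} (h : ∀ a ∈ S, ∀ b ∈ S, a ≤ b + 1) :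
    S.encard ≤ 2 := by
  rcases S.eq_empty_or_nonempty with rfl | hne
  · simp
  have hsub : S ⊆ {sInf S, sInf S + 1} := fun a ha => by
    have := Nat.sInf_le ha
    have := h a ha _ (Nat.sInf_mem hne)
    simp only [Set.mem_insert_iff, Set.mem_singleton_iff]
    omega
  exact (Set.encard_le_encard hsub).trans (Set.encard_pair (by omega)).le

lemma encard_setOf_mem_Icc_grid_le_two {N : ℕ} {a h y : ℝ} (hh : 0 < h) :
    {t : Fin N | y ∈ Icc (a + t * h) (a + (t + 1) * h)}.encard ≤ 2 := by
  rw [← Fin.val_injective.encard_image]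
  refine Set.encard_le_two_of_forall_le_add_one ?_
  rintro _ ⟨t, ht, rfl⟩ _ ⟨t', ht', rfl⟩
  have : (t : ℝ) * h ≤ ((t' : ℝ) + 1) * h := by linarith [ht.1, ht'.2]
  exact_mod_cast le_of_mul_le_mul_right this hh

lemma MeasureTheory.Measure.sum_measure_le_mul_measure_iUnion {α ι : Type*} [MeasurableSpace α]
    [Fintype ι] (μ : Measure α) {s : ι → Set α} {M : ℕ} (hs_meas : ∀ i, MeasurableSet (s i))
    (hs : ∀ y, {i | y ∈ s i}.encard ≤ M) :
    ∑ i, μ (s i) ≤ M * μ (⋃ i, s i) := by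
  simpa [Measure.sum_apply, tsum_fintype] using Measure.sum_restrict_le (μ := μ) hs_meas hs univ

lemma EuclideanSpace.dist_le_sqrt_card_mul {ι : Type*} [Fintype ι] {y z : EuclideanSpace ℝ ι}
    {δ : ℝ} (hδ : 0 ≤ δ) (h : ∀ i, |y i - z i| ≤ δ) :
    dist y z ≤ √(Fintype.card ι) * δ := by
  rw [EuclideanSpace.dist_eq]
  calc √(∑ i, dist (y i) (z i) ^ 2) ≤ √(∑ _i : ι, δ ^ 2) :=
        Real.sqrt_le_sqrt <| Finset.sum_le_sum fun i _ => by
          rw [Real.dist_eq]; exact pow_le_pow_left₀ (abs_nonneg _) (h i) 2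
    _ = √(Fintype.card ι) * δ := by
        rw [Finset.sum_const, Finset.card_univ, nsmul_eq_mul, Real.sqrt_mul (by positivity),
          Real.sqrt_sq hδ]

section DyadicCube

variable {n : ℕ} (x : EuclideanSpace ℝ (Fin n)) {R : ℝ} (j : ℕ)

lemma dyadicCube_subset_cubeQ (hR : 0 ≤ R) (k : Fin n → Fin (2 ^ j)) :
    dyadicCube x R j k ⊆ cubeQ x R := by
  intro y hy i
  have hk : ((k i : ℕ) : ℝ) + 1 ≤ 2 ^ j := by exact_mod_cast (k i).isLt
  have hside : (2 : ℝ) ^ j * (2 * R / 2 ^ j) = 2 * R := by field_simp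
  have hh : 0 ≤ 2 * R / 2 ^ j := by positivity
  constructor
  · nlinarith [(hy i).1]
  · nlinarith [(hy i).2]

lemma isClosed_dyadicCube (k : Fin n → Fin (2 ^ j)) : IsClosed (dyadicCube x R j k) := by
  simp only [dyadicCube, Set.ofPred_forall, Set.ofPred_and]
  exact isClosed_iInter fun i =>
    (isClosed_le continuous_const (by fun_prop)).inter (isClosed_le (by fun_prop) continuous_const)

lemma diam_dyadicCube_le (hR : 0 ≤ R) (k : Fin n → Fin (2 ^ j)) :
    diam (dyadicCube x R j k) ≤ √n * (2 * R / 2 ^ j) := by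
  have hh : 0 ≤ 2 * R / 2 ^ j := by positivity
  refine diam_le_of_forall_dist_le (by positivity) fun y hy z hz => ?_
  have hcoord : ∀ i, |y i - z i| ≤ 2 * R / 2 ^ j := fun i => abs_sub_le_iff.2
    ⟨by linarith [(hy i).2, (hz i).1], by linarith [(hy i).1, (hz i).2]⟩
  simpa using EuclideanSpace.dist_le_sqrt_card_mul hh hcoord

lemma encard_setOf_mem_dyadicCube_le (hR : 0 < R) (y : EuclideanSpace ℝ (Fin n)) :
    {k : Fin n → Fin (2 ^ j) | y ∈ dyadicCube x R j k}.encard ≤ 2 ^ n := by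
  have hpi : {k : Fin n → Fin (2 ^ j) | y ∈ dyadicCube x R j k} = Set.pi univ fun i =>
      {t : Fin (2 ^ j) | y i ∈ Icc (x i - R + t * (2 * R / 2 ^ j))
        (x i - R + (t + 1) * (2 * R / 2 ^ j))} := by
    ext k; simp [dyadicCube]
  rw [hpi, Set.encard_pi_eq_prod_encard]
  calc ∏ i, _ ≤ ∏ _i : Fin n, (2 : ℕ∞) :=
        Finset.prod_le_prod' fun i _ => encard_setOf_mem_Icc_grid_le_two (by positivity)
    _ = 2 ^ n := by simp

lemma sum_measure_dyadicCube_le (hR : 0 < R) (μ : Measure (EuclideanSpace ℝ (Fin n))) :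
    ∑ k, μ (dyadicCube x R j k) ≤ 2 ^ n * μ (cubeQ x R) := by
  calc ∑ k, μ (dyadicCube x R j k) ≤ (2 ^ n : ℕ) * μ (⋃ k, dyadicCube x R j k) :=
        μ.sum_measure_le_mul_measure_iUnion (fun k => (isClosed_dyadicCube x j k).measurableSet)
          fun y => by exact_mod_cast encard_setOf_mem_dyadicCube_le x j hR y
    _ ≤ 2 ^ n * μ (cubeQ x R) := by
        push_cast
        gcongr
        exact iUnion_subset (dyadicCube_subset_cubeQ x j hR.le)

end DyadicCube

lemma rpow_lt_mul_rpow_mul_of_lt_mul_rpow_mul_rpow {a p C d D s t : ℝ} (hap : a ≤ p) (hp : 0 < p)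
    (hC : 0 ≤ C) (hd : 0 ≤ d) (hdD : d ≤ D) (hs : 0 ≤ s) (ht : 0 ≤ t)
    (h : s < C * d ^ (1 - a / p) * t ^ (1 / p)) :
    s ^ p < C ^ p * D ^ (p - a) * t := by
  have hθ : 0 ≤ 1 - a / p := sub_nonneg.2 ((div_le_one hp).2 hap)
  have hD : 0 ≤ D := hd.trans hdD
  have hsD : s < C * D ^ (1 - a / p) * t ^ (1 / p) := h.trans_le <| by gcongr
  calc s ^ p < (C * D ^ (1 - a / p) * t ^ (1 / p)) ^ p := by gcongr
    _ = C ^ p * D ^ (p - a) * t := by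
        rw [Real.mul_rpow (by positivity) (by positivity), Real.mul_rpow hC (by positivity),
          ← Real.rpow_mul hD, ← Real.rpow_mul ht, one_div_mul_cancel hp.ne', Real.rpow_one]
        congr 3
        field_simp

section MajorCubes

variable {n : ℕ} {p C₃ R s : ℝ} (x : EuclideanSpace ℝ (Fin n))
  (μ : Measure (EuclideanSpace ℝ (Fin n)))
  (f : EuclideanSpace ℝ (Fin n) → EuclideanSpace ℝ (Fin n)) (j : ℕ)

lemma ofReal_rpow_le_measure_dyadicCube (hp : (n : ℝ) < p) (hC₃ : 0 ≤ C₃) (hR : 0 ≤ R)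
    (hs : 0 ≤ s) {k : Fin n → Fin (2 ^ j)}
    (hf : diam (f '' dyadicCube x R j k) ≤
      C₃ * diam (dyadicCube x R j k) ^ (1 - (n : ℝ) / p) *
        (μ (dyadicCube x R j k)).toReal ^ (1 / p))
    (hk : s < diam (f '' dyadicCube x R j k)) :
    ENNReal.ofReal (s ^ p) ≤
      ENNReal.ofReal (C₃ ^ p * (√n * (2 * R / 2 ^ j)) ^ (p - n)) * μ (dyadicCube x R j k) := by
  have hlt := rpow_lt_mul_rpow_mul_of_lt_mul_rpow_mul_rpow hp.le ((Nat.cast_nonneg n).trans_lt hp)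
    hC₃ diam_nonneg (diam_dyadicCube_le x j hR k) hs ENNReal.toReal_nonneg (hk.trans_le hf)
  calc ENNReal.ofReal (s ^ p)
      ≤ ENNReal.ofReal (C₃ ^ p * (√n * (2 * R / 2 ^ j)) ^ (p - n) *
          (μ (dyadicCube x R j k)).toReal) := ENNReal.ofReal_le_ofReal hlt.le
    _ ≤ _ := by
        rw [ENNReal.ofReal_mul (by positivity)]
        gcongr
        exact ENNReal.ofReal_toReal_le

lemma card_major_dyadicCube_mul_le (hp : (n : ℝ) < p) (hC₃ : 0 ≤ C₃) (hR : 0 < R) (hs : 0 ≤ s)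
    (hf : ∀ k : Fin n → Fin (2 ^ j), diam (f '' dyadicCube x R j k) ≤
      C₃ * diam (dyadicCube x R j k) ^ (1 - (n : ℝ) / p) *
        (μ (dyadicCube x R j k)).toReal ^ (1 / p)) :
    (Nat.card {k : Fin n → Fin (2 ^ j) // s < diam (f '' dyadicCube x R j k)} : ℝ≥0∞) *
        ENNReal.ofReal (s ^ p) ≤
      ENNReal.ofReal (C₃ ^ p * (√n * (2 * R / 2 ^ j)) ^ (p - n)) * (2 ^ n * μ (cubeQ x R)) := by
  classical
  set c := ENNReal.ofReal (C₃ ^ p * (√n * (2 * R / 2 ^ j)) ^ (p - n))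
  rw [Nat.card_eq_fintype_card, Fintype.card_subtype, ← nsmul_eq_mul]
  calc _ ≤ ∑ k ∈ {k | s < diam (f '' dyadicCube x R j k)}, c * μ (dyadicCube x R j k) :=
        Finset.card_nsmul_le_sum _ _ _ fun k hk => ofReal_rpow_le_measure_dyadicCube x μ f j hp hC₃
          hR.le hs (hf k) (Finset.mem_filter.1 hk).2
    _ ≤ ∑ k, c * μ (dyadicCube x R j k) := Finset.sum_le_sum_of_subset (Finset.filter_subset _ _)
    _ ≤ c * (2 ^ n * μ (cubeQ x R)) := by
        rw [← Finset.mul_sum]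
        gcongr
        exact sum_measure_dyadicCube_le x j hR μ

lemma card_major_dyadicCube_le (hp : (n : ℝ) < p) (hC₃ : 0 ≤ C₃) (hR : 0 < R) (hs : 0 < s)
    (hf : ∀ k : Fin n → Fin (2 ^ j), diam (f '' dyadicCube x R j k) ≤
      C₃ * diam (dyadicCube x R j k) ^ (1 - (n : ℝ) / p) *
        (μ (dyadicCube x R j k)).toReal ^ (1 / p)) :
    (Nat.card {k : Fin n → Fin (2 ^ j) // s < diam (f '' dyadicCube x R j k)} : ℝ≥0∞) ≤
      ENNReal.ofReal (2 ^ n * C₃ ^ p * (2 * √n) ^ (p - n) * s ^ (-p) * (R / 2 ^ j) ^ (p - n)) *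
        μ (cubeQ x R) := by
  have hsp : 0 < s ^ p := Real.rpow_pos_of_pos hs p
  have h := card_major_dyadicCube_mul_le x μ f j hp hC₃ hR hs.le hf
  rw [← ENNReal.le_div_iff_mul_le (Or.inl (ENNReal.ofReal_pos.2 hsp).ne')
    (Or.inl ENNReal.ofReal_ne_top), div_eq_mul_inv, ← ENNReal.ofReal_inv_of_pos hsp] at h
  refine h.trans_eq ?_
  have h2 : (2 : ℝ≥0∞) ^ n = ENNReal.ofReal (2 ^ n) := by
    rw [ENNReal.ofReal_pow zero_le_two, ENNReal.ofReal_ofNat]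
  have hside : √n * (2 * R / 2 ^ j) = 2 * √n * (R / 2 ^ j) := by ring
  rw [h2, ← mul_assoc, ← ENNReal.ofReal_mul (by positivity), mul_right_comm,
    ← ENNReal.ofReal_mul (by positivity), hside, Real.mul_rpow (by positivity) (by positivity),
    Real.rpow_neg hs.le]
  congr 2
  ring

end MajorCubes

lemma ENNReal.tsum_le_of_le_ofReal_mul_div_two_pow_rpow {a : ℕ → ℝ≥0∞} {c r γ : ℝ} {K : ℝ≥0∞}
    (hγ : 0 < γ) (hc : 0 ≤ c) (hr : 0 ≤ r) (h : ∀ j, a j ≤ ENNReal.ofReal (c * (r / 2 ^ j) ^ γ) * K)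
    (m : ℕ) :
    ∑' j, a (m + j) ≤ ENNReal.ofReal (c * (1 - (2 ^ γ)⁻¹)⁻¹ * (r / 2 ^ m) ^ γ) * K := by
  set q : ℝ := (2 ^ γ)⁻¹
  have hq0 : 0 ≤ q := by positivity
  have hq1 : q < 1 := inv_lt_one_of_one_lt₀ (Real.one_lt_rpow _root_.one_lt_two hγ)
  have hterm : ∀ j : ℕ, c * (r / 2 ^ (m + j)) ^ γ = c * (r / 2 ^ m) ^ γ * q ^ j := fun j => by
    rw [pow_add, ← div_div, div_eq_mul_inv _ ((2 : ℝ) ^ j),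
      Real.mul_rpow (by positivity) (by positivity), Real.inv_rpow (by positivity),
      ← Real.rpow_pow_comm zero_le_two, inv_pow, mul_assoc]
  calc ∑' j, a (m + j)
      ≤ ∑' j, ENNReal.ofReal (c * (r / 2 ^ m) ^ γ) * K * ENNReal.ofReal q ^ j :=
        ENNReal.tsum_le_tsum fun j => (h (m + j)).trans_eq <| by
          rw [hterm, ENNReal.ofReal_mul (by positivity), ENNReal.ofReal_pow hq0]
          ring
    _ = ENNReal.ofReal (c * (r / 2 ^ m) ^ γ) * K * (1 - ENNReal.ofReal q)⁻¹ := by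
        rw [ENNReal.tsum_mul_left, ENNReal.tsum_geometric]
    _ = ENNReal.ofReal (c * (1 - q)⁻¹ * (r / 2 ^ m) ^ γ) * K := by
        rw [← ENNReal.ofReal_one, ← ENNReal.ofReal_sub _ hq0,
          ← ENNReal.ofReal_inv_of_pos (sub_pos.2 hq1), mul_right_comm,
          ← ENNReal.ofReal_mul (by positivity)]
        congr 2
        ring

/-- counting estimate for major dyadic cubes under a Morrey–Sobolev-type
diameter bound (key estimate in Lemma 4.1 of the paper). -/
theorem stmt16 {n : ℕ} (hn : 1 ≤ n) (p C₃ : ℝ) (hp : (n : ℝ) < p) (hC₃ : 0 < C₃) :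
    ∃ C : ℝ, 0 < C ∧
      ∀ (x : EuclideanSpace ℝ (Fin n)) (R : ℝ), 0 < R → ∀ s : ℝ, 0 < s →
      ∀ μ : MeasureTheory.Measure (EuclideanSpace ℝ (Fin n)), μ (cubeQ x R) < ⊤ →
      ∀ f : EuclideanSpace ℝ (Fin n) → EuclideanSpace ℝ (Fin n),
        (∀ (j : ℕ) (k : Fin n → Fin (2 ^ j)),
          diam (f '' dyadicCube x R j k) ≤
            C₃ * diam (dyadicCube x R j k) ^ (1 - (n : ℝ) / p) *
              (μ (dyadicCube x R j k)).toReal ^ (1 / p)) →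
      ∀ m : ℕ,
        (∑' j : ℕ,
            (Nat.card {k : Fin n → Fin (2 ^ (m + j)) //
                s < diam (f '' dyadicCube x R (m + j) k)} : ℝ≥0∞))
          ≤ ENNReal.ofReal (C * s ^ (-p) * (R / 2 ^ m) ^ (p - (n : ℝ))) * μ (cubeQ x R) := by
  have hpn : 0 < p - n := sub_pos.2 hp
  have hq : ((2 : ℝ) ^ (p - n))⁻¹ < 1 := inv_lt_one_of_one_lt₀ (Real.one_lt_rpow one_lt_two hpn)
  refine ⟨2 ^ n * C₃ ^ p * (2 * √n) ^ (p - n) * (1 - (2 ^ (p - n))⁻¹)⁻¹,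
    by have := sub_pos.2 hq; positivity, ?_⟩
  intro x R hR s hs μ _ f hf m
  have htail := ENNReal.tsum_le_of_le_ofReal_mul_div_two_pow_rpow hpn
    (by positivity : 0 ≤ 2 ^ n * C₃ ^ p * (2 * √n) ^ (p - n) * s ^ (-p)) hR.le
    (fun j => card_major_dyadicCube_le x μ f j hp hC₃.le hR hs (hf j)) m
  refine htail.trans_eq ?_
  congr 2
  ring
end
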